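/- arXiv:2308.00850 — 4 statements merged into one kernel-verified Lean document; each statement's English description precedes it below -/
import Mathlib

section
/- If w is an antipalindrome and Γ is a string attractor of w, then the mirror image Γ^R = {|w| - 1 - γ : γ ∈ Γ} is also a string attractor of w. -/
def occursAt (f w : List Bool) (i : ℕ) : Prop :=
  i + f.length ≤ w.length ∧ (w.drop i).take f.length = f

def IsAttractor (w : List Bool) (Γ : Finset ℕ) : Prop :=
  (∀ γ ∈ Γ, γ < w.length) ∧
  ∀ f : List Bool, f ≠ [] → f <:+: w →
    ∃ i, occursAt f w i ∧ ∃ γ ∈ Γ, i ≤ γ ∧ γ < i + f.length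

def Emap (w : List Bool) : List Bool := (w.reverse).map (fun b => !b)

def IsPal (w : List Bool) : Prop := w.reverse = w

def IsAntipal (w : List Bool) : Prop := Emap w = w

def IsPalClosure (w p : List Bool) : Prop :=
  IsPal p ∧ w <+: p ∧ ∀ q, IsPal q → w <+: q → p.length ≤ q.length

def IsAntipalClosure (w p : List Bool) : Prop :=
  IsAntipal p ∧ w <+: p ∧ ∀ q, IsAntipal q → w <+: q → p.length ≤ q.length

lemma Emap_append (a b : List Bool) : Emap (a ++ b) = Emap b ++ Emap a := by
  simp [Emap]

lemma Emap_length (a : List Bool) : (Emap a).length = a.length := by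
  simp [Emap]

lemma Emap_Emap (a : List Bool) : Emap (Emap a) = a := by
  simp only [Emap, List.map_reverse, List.reverse_reverse, List.map_map]
  have : ((fun b => !b) ∘ fun b : Bool => !b) = id := by funext x; simp
  rw [this, List.map_id]

lemma occursAt_iff (f w : List Bool) (i : ℕ) :
    occursAt f w i ↔ ∃ a b, w = a ++ f ++ b ∧ a.length = i := by
  constructor
  · rintro ⟨h1, h2⟩
    refine ⟨w.take i, w.drop (i + f.length), ?_, ?_⟩
    · conv_lhs => rw [← List.take_append_drop i w]
      rw [List.append_assoc]
      congr 1
      conv_lhs => rw [← List.take_append_drop f.length (w.drop i)]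
      rw [h2, List.drop_drop]
    · exact List.length_take_of_le (by omega)
  · rintro ⟨a, b, rfl, rfl⟩
    constructor
    · simp
    · rw [List.drop_append_of_le_length (by simp)]
      simp

theorem stmt_3 (w : List Bool) (hw : IsAntipal w) (Γ : Finset ℕ)
    (h : IsAttractor w Γ) :
    IsAttractor w (Γ.image (fun γ => w.length - 1 - γ)) := by
  obtain ⟨hb, ha⟩ := h
  constructor
  · intro γ' hγ'
    simp only [Finset.mem_image] at hγ'
    obtain ⟨γ, hγ, rfl⟩ := hγ'
    have := hb γ hγ
    omega
  · intro f hf hinf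
    obtain ⟨s, t, hst⟩ := hinf
    have hEf : Emap f <:+: w := by
      refine ⟨Emap t, Emap s, ?_⟩
      rw [← hw, ← hst, Emap_append, Emap_append, List.append_assoc]
    have hEfne : Emap f ≠ [] := by
      intro hc
      apply hf
      have := congrArg Emap hc
      rwa [Emap_Emap] at this
    obtain ⟨i, hocc, γ, hγ, hiγ, hγi⟩ := ha (Emap f) hEfne hEf
    rw [occursAt_iff] at hocc
    obtain ⟨a, b, hab, hlen⟩ := hocc
    have hw' : w = Emap b ++ f ++ Emap a := by
      conv_lhs => rw [← hw, hab]
      rw [Emap_append, Emap_append, Emap_Emap, List.append_assoc]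
    have hlw : w.length = a.length + (Emap f).length + b.length := by
      rw [hab]; simp; ring
    have hfl : (Emap f).length = f.length := Emap_length f
    refine ⟨b.length, ?_, w.length - 1 - γ, ?_, ?_, ?_⟩
    · rw [occursAt_iff]
      exact ⟨Emap b, Emap a, hw', by rw [Emap_length]⟩
    · exact Finset.mem_image_of_mem _ hγ
    · have hγw := hb γ hγ
      have hf0 : 0 < f.length := List.length_pos_iff.mpr hf
      omega
    · have hγw := hb γ hγ
      have hf0 : 0 < f.length := List.length_pos_iff.mpr hf
      omega
end

section
/- For every non-empty binary word w, there exists a unique shortest palindrome having w as a prefix (the palindromic closure w^R), and it has the form w^R = v x R(v), where w = v x and x is the longest palindromic suffix of w. -/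
theorem stmt_4 (w : List Bool) (hw : w ≠ []) :
    ∃ p, IsPalClosure w p ∧ (∀ q, IsPalClosure w q → q = p) ∧
      ∃ v x, w = v ++ x ∧ IsPal x ∧
        (∀ s, s <:+ w → IsPal s → s.length ≤ x.length) ∧
        p = v ++ x ++ v.reverse := by
  classical
  -- N : length of the longest palindromic suffix of w
  set P : ℕ → Prop := fun n => n ≤ w.length ∧ IsPal (w.drop (w.length - n)) with hP
  have hPdec : DecidablePred P := fun n => by
    simp only [hP, IsPal]; infer_instance
  set N := Nat.findGreatest P w.length with hN
  have hP0 : P 0 := by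
    constructor
    · exact Nat.zero_le _
    · simp [IsPal]
  have hPN : P N := Nat.findGreatest_spec (Nat.zero_le _) hP0
  set x := w.drop (w.length - N) with hx
  set v := w.take (w.length - N) with hv
  have hvx : w = v ++ x := (List.take_append_drop _ w).symm
  have hxlen : x.length = N := by
    simp [hx, Nat.sub_sub_self hPN.1]
  have hvlen : v.length = w.length - N := by
    simp [hv, Nat.sub_le]
  have hxpal : IsPal x := hPN.2
  -- maximality of x
  have hmax : ∀ s, s <:+ w → IsPal s → s.length ≤ x.length := by
    intro s hs hspal
    rw [hxlen]
    have hslen : s.length ≤ w.length := hs.length_le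
    refine Nat.le_findGreatest hslen ⟨hslen, ?_⟩
    obtain ⟨u, hu⟩ := hs
    have hul : u.length = w.length - s.length := by
      have := congrArg List.length hu
      simp at this; omega
    have hds : w.drop (w.length - s.length) = s := by
      rw [← hul, ← hu, List.drop_left]
    rw [hds]
    exact hspal
  set p := v ++ x ++ v.reverse with hp
  have hxr : x.reverse = x := hxpal
  have hppal : IsPal p := by
    simp [hp, IsPal, List.reverse_append, hxr]
  have hwp : w <+: p := by
    refine ⟨v.reverse, ?_⟩
    rw [hvx, hp, List.append_assoc]
  -- key: if q is a palindrome with w as prefix and |q| - |w| ≤ |w|, then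
  -- the overlap w.drop (|q|-|w|) is a palindromic suffix of w
  have key : ∀ t : List Bool, IsPal (w ++ t) → t.length ≤ w.length →
      IsPal (w.drop t.length) := by
    intro t hq htl
    have h2 : t.reverse ++ w.reverse = w ++ t := by
      have := hq; unfold IsPal at this
      simpa [List.reverse_append] using this
    have e1 : List.drop t.length (t.reverse ++ w.reverse) = w.reverse := by
      simp
    have h3 : w.reverse = w.drop t.length ++ t := by
      have := congrArg (List.drop t.length) h2
      rw [e1, List.drop_append_of_le_length htl] at this
      exact this
    unfold IsPal
    rw [List.reverse_drop, h3,
      show w.length - t.length = (w.drop t.length).length by simp,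
      List.take_left]
  -- minimality of p
  have hmin : ∀ q, IsPal q → w <+: q → p.length ≤ q.length := by
    intro q hqpal hwq
    by_contra hlt
    push_neg at hlt
    obtain ⟨t, ht⟩ := hwq
    have htlen : t.length < v.length := by
      have h1 := congrArg List.length ht
      have h2 := congrArg List.length hp
      have h3 := congrArg List.length hvx
      simp at h1 h2 h3
      omega
    have htw : t.length ≤ w.length := by
      have h3 := congrArg List.length hvx
      simp at h3; omega
    have hpal' : IsPal (w.drop t.length) := key t (ht ▸ hqpal) htw
    have hsuf := hmax _ (List.drop_suffix t.length w) hpal'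
    have h3 := congrArg List.length hvx
    simp at h3 hsuf
    omega
  refine ⟨p, ⟨hppal, hwp, hmin⟩, ?_, v, x, hvx, hxpal, hmax, rfl⟩
  -- uniqueness
  intro q ⟨hqpal, hwq, hqmin⟩
  have hlen : q.length = p.length :=
    le_antisymm (hqmin p hppal hwp) (hmin q hqpal hwq)
  obtain ⟨t, ht⟩ := hwq
  have htlen : t.length = v.length := by
    have h1 := congrArg List.length ht
    have h2 := congrArg List.length hp
    have h3 := congrArg List.length hvx
    simp at h1 h2 h3
    omega
  -- from q palindrome: t.reverse ++ w.reverse = w ++ t, so t = v.reverse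
  have h2 : t.reverse ++ w.reverse = w ++ t := by
    have := ht ▸ hqpal; unfold IsPal at this
    simpa [List.reverse_append] using this
  have h4 : w.reverse = x ++ v.reverse := by
    rw [hvx, List.reverse_append, hxpal]
  have h5 : t.reverse ++ (x ++ v.reverse) = (v ++ x) ++ t := by
    rw [← h4, ← hvx]; exact h2
  have h6 : (t.reverse ++ x) ++ v.reverse = (v ++ x) ++ t := by
    rw [← h5]; simp
  have h7 := (List.append_inj h6 (by simp [htlen])).2
  rw [← ht, ← h7, hp, hvx, List.append_assoc]
end

section
/- Let w be a palindrome over {0,1} and a a letter. If the longest palindromic suffix of wa is aua for a palindrome u, then the palindromic closure satisfies (wa)^R = w a v = R(v) a u a v, where v is determined by w = R(v) a u. -/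
theorem stmt_8 (w u v : List Bool) (a : Bool)
    (hw : IsPal w) (hu : IsPal u)
    (hdecomp : w = v.reverse ++ [a] ++ u)
    (hsuf : ([a] ++ u ++ [a]) <:+ (w ++ [a]))
    (hmax : ∀ s, s <:+ (w ++ [a]) → IsPal s → s.length ≤ ([a] ++ u ++ [a]).length) :
    IsPalClosure (w ++ [a]) (w ++ [a] ++ v) := by
  unfold IsPal at hw hu
  have n := w.length
  refine ⟨?_, ⟨v, by simp⟩, ?_⟩
  · -- palindrome
    show (w ++ [a] ++ v).reverse = _
    rw [hdecomp]
    simp [List.reverse_append, hu]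
  · intro q hq hpre
    by_contra hlt
    push_neg at hlt
    -- lengths
    have hql : w.length + 1 ≤ q.length := by
      have := hpre.length_le; simpa using this
    set k : ℕ := q.length - (w.length + 1) with hk
    have hqlen : q.length = w.length + 1 + k := by omega
    have hkv : k < v.length := by
      have h2 := hlt
      simp [List.length_append] at h2
      omega
    -- aw is a suffix of q
    have hrev : ([a] ++ w) <:+ q := by
      have h1 : (w ++ [a]).reverse <:+ q.reverse := hpre.reverse
      rw [hq] at h1
      simpa [List.reverse_append, hw] using h1
    obtain ⟨z, hz⟩ := hrev
    have hzlen : z.length = k := by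
      have := congrArg List.length hz
      simp [List.length_append] at this
      omega
    -- q.drop k = [a] ++ w
    have hdropk : q.drop k = [a] ++ w := by
      rw [← hz, ← hzlen, List.drop_left]
    -- q.take (w.length+1) = w ++ [a]
    have htake : q.take (w.length + 1) = w ++ [a] := by
      obtain ⟨r, hr⟩ := hpre
      rw [← hr]
      rw [List.take_append_of_le_length (by simp)]
      simp
    set s : List Bool := (w ++ [a]).drop k with hs
    have hssuf : s <:+ (w ++ [a]) := List.drop_suffix _ _
    have hslen : s.length = w.length + 1 - k := by simp [hs]
    -- s is a prefix of [a] ++ w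
    have hspre : s <+: ([a] ++ w) := by
      have : s = (([a] ++ w)).take (w.length + 1 - k) := by
        rw [hs, ← htake, List.drop_take, hdropk]
      rw [this]
      exact List.take_prefix _ _
    -- s.reverse is a prefix of [a] ++ w
    have hsrpre : s.reverse <+: ([a] ++ w) := by
      have h1 : s.reverse <+: (w ++ [a]).reverse := hssuf.reverse
      simpa [List.reverse_append, hw] using h1
    have hspal : IsPal s := by
      have := List.prefix_of_prefix_length_le hsrpre hspre (by simp)
      exact this.eq_of_length (by simp)
    have hle := hmax s hssuf hspal
    have hwl : w.length = v.length + 1 + u.length := by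
      have := congrArg List.length hdecomp
      simp [List.length_append] at this
      omega
    simp [List.length_append] at hle
    omega
end

section
/- Let k ≥ 2 and let w be a word of the form w = (01)^{p_0} 011001 (01)^{p_1} 011001 ⋯ (01)^{p_{j-1}} 011001 (01)^{p_j} with j ≥ 1, p_i ∈ {k-2, k-1} for all i, and p_0 = p_j = k-1. Then w has no string attractor of size two. -/
/-
In `w` the squares `11` and `00` occur only inside the blocks `011001`, i.e. inside runs `1100`.
A two-point attractor must therefore consist of a `1` at position `c` or `c + 1` of such a run
and a `0` at position `c' + 2` or `c' + 3` of another one. An occurrence of an alternating word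
cannot pass through a square, so in each of the four cases one of the factors `010`, `10`, `01`,
`101` has no occurrence through either point.
-/

def Covers {α : Type*} (w f : List α) (γ : ℕ) : Prop :=
  ∃ i, f <+: w.drop i ∧ i ≤ γ ∧ γ < i + f.length

def SquaresInRuns (w : List Bool) : Prop :=
  ∀ (a : Bool) (i : ℕ), [a, a] <+: w.drop i →
    ∃ c, [true, true, false, false] <+: w.drop c ∧ i = if a then c else c + 2

def IsBlock (b : List Bool) : Prop :=
  b = [false, true] ∨ b = [false, true, true, false, false, true]

theorem prefix_drop_of_occursAt {f w : List Bool} {i : ℕ} (h : occursAt f w i) :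
    f <+: w.drop i :=
  List.prefix_iff_eq_take.mpr h.2.symm

theorem IsAttractor.exists_covers {w f : List Bool} {Γ : Finset ℕ} (hΓ : IsAttractor w Γ)
    (hf : f ≠ []) (hfw : f <:+: w) : ∃ γ ∈ Γ, Covers w f γ := by
  obtain ⟨i, hi, γ, hγ, hiγ, hγi⟩ := hΓ.2 f hf hfw
  exact ⟨γ, hγ, i, prefix_drop_of_occursAt hi, hiγ, hγi⟩

theorem getElem?_of_prefix_drop {α : Type*} {f w : List α} {i d : ℕ} (h : f <+: w.drop i)
    (hd : d < f.length) : w[i + d]? = f[d]? := by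
  rw [← List.getElem?_drop, List.prefix_iff_getElem?.mp h d hd, List.getElem?_eq_getElem hd]

theorem Covers.exists_mem_getElem? {α : Type*} {w f : List α} {γ : ℕ} (h : Covers w f γ) :
    ∃ a ∈ f, w[γ]? = some a := by
  obtain ⟨i, hfw, hiγ, hγi⟩ := h
  have hd : γ - i < f.length := by omega
  refine ⟨f[γ - i], List.getElem_mem hd, ?_⟩
  rw [← List.getElem?_eq_getElem hd, ← getElem?_of_prefix_drop hfw hd, Nat.add_sub_cancel' hiγ]

theorem add_length_le_of_isChain_ne {α : Type*} {f w : List α} {i x : ℕ}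
    (hf : f.IsChain (· ≠ ·)) (hfw : f <+: w.drop i) (hx : w[x]? = w[x + 1]?) (hix : i ≤ x) :
    i + f.length ≤ x + 1 := by
  by_contra! hlt
  have hd : x - i + 1 < f.length := by omega
  apply List.isChain_iff_getElem.mp hf (x - i) hd
  have h₀ := getElem?_of_prefix_drop hfw (d := x - i) (by omega)
  have h₁ := getElem?_of_prefix_drop hfw hd
  rw [Nat.add_sub_cancel' hix] at h₀
  rw [← Nat.add_assoc, Nat.add_sub_cancel' hix, ← hx, h₀] at h₁
  simpa [List.getElem?_eq_getElem, Nat.lt_of_succ_lt hd, hd] using h₁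

theorem covers_of_run {w f : List Bool} {c γ : ℕ}
    (hrun : [true, true, false, false] <+: w.drop c) (hf : f.IsChain (· ≠ ·))
    (hγ : Covers w f γ) :
    (γ = c → f.getLast? = some true) ∧
    (γ = c + 1 → f.head? = some true ∧ f.length ≤ 2) ∧
    (γ = c + 2 → f.getLast? = some false ∧ f.length ≤ 2) ∧
    (γ = c + 3 → f.head? = some false) := by
  obtain ⟨i, hfw, hiγ, hγi⟩ := hγ
  have hw : ∀ d < 4, w[c + d]? = [true, true, false, false][d]? :=
    fun d hd => getElem?_of_prefix_drop hrun hd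
  have hw₀ : w[c]? = some true := hw 0 (by simp)
  have hw₁ : w[c + 1]? = some true := hw 1 (by simp)
  have hw₂ : w[c + 2]? = some false := hw 2 (by simp)
  have hw₃ : w[c + 3]? = some false := hw 3 (by simp)
  have hletter : ∀ d < f.length, f[d]? = w[i + d]? :=
    fun d hd => (getElem?_of_prefix_drop hfw hd).symm
  have h₁ : i ≤ c → i + f.length ≤ c + 1 :=
    add_length_le_of_isChain_ne hf hfw (hw₀.trans hw₁.symm)
  have h₃ : i ≤ c + 2 → i + f.length ≤ c + 3 :=
    add_length_le_of_isChain_ne hf hfw (hw₂.trans hw₃.symm)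
  rw [List.head?_eq_getElem?, List.getLast?_eq_getElem?]
  refine ⟨fun h => ?_, fun h => ⟨?_, by omega⟩, fun h => ⟨?_, by omega⟩, fun h => ?_⟩
  · rwa [hletter _ (by omega), show i + (f.length - 1) = c by omega]
  · rwa [hletter 0 (by omega), show i + 0 = c + 1 by omega]
  · rwa [hletter _ (by omega), show i + (f.length - 1) = c + 2 by omega]
  · rwa [hletter 0 (by omega), show i + 0 = c + 3 by omega]

theorem List.exists_drop_flatten_eq {α : Type*} {D : List (List α)} {i : ℕ}
    (hi : i < D.flatten.length) :
    ∃ b ∈ D, ∃ D', D' <:+ D ∧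
      ∃ B, ∃ m < b.length, i = B + m ∧ D.flatten.drop B = b ++ D'.flatten := by
  induction D generalizing i with
  | nil => simp at hi
  | cons b D ih =>
    by_cases hib : i < b.length
    · exact ⟨b, List.mem_cons_self, D, List.suffix_cons _ _, 0, i, hib, by simp, by simp⟩
    · rw [List.flatten_cons, List.length_append] at hi
      obtain ⟨b', hb', D', hD', B, m, hm, hiB, hdrop⟩ := ih (i := i - b.length) (by omega)
      refine ⟨b', List.mem_cons_of_mem _ hb', D', hD'.trans (List.suffix_cons _ _), B + b.length,
        m, hm, by omega, ?_⟩
      rw [List.flatten_cons, List.drop_append, List.drop_eq_nil_of_le (by omega)]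
      simpa using hdrop

theorem IsBlock.prefix {b : List Bool} (hb : IsBlock b) : [false, true] <+: b := by
  rcases hb with rfl | rfl <;> decide

theorem flatten_eq_nil_or_cons_false {D : List (List Bool)} (hD : ∀ b ∈ D, IsBlock b) :
    D.flatten = [] ∨ ∃ r, D.flatten = false :: r := by
  cases D with
  | nil => exact Or.inl rfl
  | cons b D =>
    obtain ⟨r, hr⟩ := (hD b List.mem_cons_self).prefix
    exact Or.inr ⟨true :: r ++ D.flatten, by simp [← hr]⟩

/-- Blocks start with `0` and end with `1`, so a square `bb` never straddles two blocks; inside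
the blocks the only squares are the `11` and `00` of `0 1100 1`. -/
theorem squaresInRuns_flatten {D : List (List Bool)} (hD : ∀ b ∈ D, IsBlock b) :
    SquaresInRuns D.flatten := by
  intro a i h
  have hi : i < D.flatten.length := by
    have := h.length_le
    simp only [List.length_drop, List.length_cons] at this
    omega
  obtain ⟨b, hb, D', hD', B, m, hm, rfl, hdrop⟩ := List.exists_drop_flatten_eq hi
  rw [← List.drop_drop, hdrop, List.drop_append_of_le_length hm.le] at h
  suffices b = [false, true, true, false, false, true] ∧ m = if a then 1 else 3 by
    obtain ⟨rfl, rfl⟩ := this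
    refine ⟨B + 1, ?_, by cases a <;> simp⟩
    rw [← List.drop_drop, hdrop]
    simp
  have hstart := flatten_eq_nil_or_cons_false fun b hb => hD b (hD'.subset hb)
  rcases hD b hb with rfl | rfl <;> simp only [List.length_cons, List.length_nil] at hm <;>
    interval_cases m <;> rcases hstart with hr | ⟨r, hr⟩ <;> cases a <;> simp [hr] at h ⊢

theorem IsAttractor.covers_or_covers {w f : List Bool} {Γ : Finset ℕ} {γ₁ γ₂ : ℕ}
    (hΓ : IsAttractor w Γ) (hcard : Γ.card = 2) (hγ₁ : γ₁ ∈ Γ) (hγ₂ : γ₂ ∈ Γ) (hne : γ₁ ≠ γ₂)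
    (hf : f ≠ []) (hfw : f <:+: w) : Covers w f γ₁ ∨ Covers w f γ₂ := by
  have hΓeq : Γ = {γ₁, γ₂} := (Finset.eq_of_subset_of_card_le
    (Finset.insert_subset hγ₁ (Finset.singleton_subset_iff.mpr hγ₂))
    (by rw [hcard, Finset.card_pair hne])).symm
  obtain ⟨γ, hγ, hcov⟩ := hΓ.exists_covers hf hfw
  rcases Finset.mem_insert.mp (hΓeq ▸ hγ) with rfl | hγ
  · exact Or.inl hcov
  · exact Or.inr (Finset.mem_singleton.mp hγ ▸ hcov)

theorem IsAttractor.exists_mem_run {w : List Bool} {Γ : Finset ℕ} (hΓ : IsAttractor w Γ)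
    (hrun : SquaresInRuns w)
    {a : Bool} (ha : [a, a] <:+: w) :
    ∃ γ ∈ Γ, w[γ]? = some a ∧ ∃ c, [true, true, false, false] <+: w.drop c ∧
      (γ = (if a then c else c + 2) ∨ γ = (if a then c else c + 2) + 1) := by
  obtain ⟨γ, hγ, hcov⟩ := hΓ.exists_covers (by simp) ha
  obtain ⟨b, hb, hwγ⟩ := hcov.exists_mem_getElem?
  obtain ⟨i, hpre, hiγ, hγi⟩ := hcov
  obtain ⟨c, hrunc, rfl⟩ := hrun a i hpre
  simp only [List.mem_cons, List.not_mem_nil, or_false, or_self] at hb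
  simp only [List.length_cons, List.length_nil] at hγi
  exact ⟨γ, hγ, hb ▸ hwγ, c, hrunc, by omega⟩

theorem card_ne_two_of_squares_in_runs {w : List Bool} {Γ : Finset ℕ} (hΓ : IsAttractor w Γ)
    (hrun : SquaresInRuns w)
    (h1100 : [true, true, false, false] <:+: w) (h0101 : [false, true, false, true] <:+: w) :
    Γ.card ≠ 2 := by
  intro hcard
  obtain ⟨γ₁, hγ₁, hw₁, c₁, hrun₁, hpos₁⟩ := hΓ.exists_mem_run hrun (a := true)
    ((by decide : [true, true] <:+: [true, true, false, false]).trans h1100)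
  obtain ⟨γ₂, hγ₂, hw₂, c₂, hrun₂, hpos₂⟩ := hΓ.exists_mem_run hrun (a := false)
    ((by decide : [false, false] <:+: [true, true, false, false]).trans h1100)
  have hcovers := fun f => hΓ.covers_or_covers (f := f) hcard hγ₁ hγ₂
    (by rintro rfl; simp [hw₁] at hw₂)
  have h010 : [false, true, false] <:+: w :=
    (by decide : _ <:+: [false, true, false, true]).trans h0101
  have h101 : [true, false, true] <:+: w :=
    (by decide : _ <:+: [false, true, false, true]).trans h0101
  have h01 : [false, true] <:+: w :=
    (by decide : _ <:+: [false, true, false, true]).trans h0101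
  have h10 : [true, false] <:+: w :=
    (by decide : _ <:+: [true, true, false, false]).trans h1100
  simp only [if_true, Bool.false_eq_true, if_false, Nat.add_assoc] at hpos₁ hpos₂
  rcases hpos₁ with rfl | rfl <;> rcases hpos₂ with rfl | rfl
  · rcases hcovers _ (by simp) h010 with h | h
    · exact absurd ((covers_of_run hrun₁ (by decide) h).1 rfl) (by decide)
    · exact absurd ((covers_of_run hrun₂ (by decide) h).2.2.1 rfl).2 (by decide)
  · rcases hcovers _ (by simp) h10 with h | h
    · exact absurd ((covers_of_run hrun₁ (by decide) h).1 rfl) (by decide)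
    · exact absurd ((covers_of_run hrun₂ (by decide) h).2.2.2 rfl) (by decide)
  · rcases hcovers _ (by simp) h01 with h | h
    · exact absurd ((covers_of_run hrun₁ (by decide) h).2.1 rfl).1 (by decide)
    · exact absurd ((covers_of_run hrun₂ (by decide) h).2.2.1 rfl).1 (by decide)
  · rcases hcovers _ (by simp) h101 with h | h
    · exact absurd ((covers_of_run hrun₁ (by decide) h).2.1 rfl).2 (by decide)
    · exact absurd ((covers_of_run hrun₂ (by decide) h).2.2.2 rfl) (by decide)

theorem card_ne_two_of_blocks {D : List (List Bool)} (hD : ∀ b ∈ D, IsBlock b)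
    (hbl : [false, true, true, false, false, true] ∈ D) {Γ : Finset ℕ}
    (hΓ : IsAttractor ([false, true] :: D).flatten Γ) : Γ.card ≠ 2 := by
  have hD' : ∀ b ∈ [false, true] :: D, IsBlock b := by
    simpa [IsBlock] using hD
  refine card_ne_two_of_squares_in_runs hΓ (squaresInRuns_flatten hD') ?_ ?_
  · exact
      (by decide : [true, true, false, false] <:+: [false, true, true, false, false, true]).trans
      (List.infix_of_mem_flatten (List.mem_cons_of_mem _ hbl))
  · obtain ⟨b, D, rfl⟩ := List.exists_cons_of_ne_nil (List.ne_nil_of_mem hbl)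
    obtain ⟨r, hr⟩ := (hD b List.mem_cons_self).prefix
    exact ⟨[], r ++ D.flatten, by simp [← hr]⟩

theorem stmt_13_general (k : ℕ) (hk : 2 ≤ k) (j : ℕ) (hj : 1 ≤ j)
    (p : ℕ → ℕ)
    (hp0 : p 0 = k - 1)
    (w : List Bool)
    (hw : w = (List.replicate (p 0) [false, true]).flatten ++
      (List.ofFn (fun i : Fin j =>
        [false, true, true, false, false, true] ++
          (List.replicate (p (i + 1)) [false, true]).flatten)).flatten) :
    ∀ Γ : Finset ℕ, IsAttractor w Γ → Γ.card ≠ 2 := by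
  intro Γ hΓ
  set D := List.replicate (p 0 - 1) [false, true] ++ (List.ofFn fun i : Fin j =>
    [false, true, true, false, false, true] :: List.replicate (p (i + 1)) [false, true]).flatten
  have hwD : w = ([false, true] :: D).flatten := by
    obtain ⟨q, hq⟩ : ∃ q, p 0 = q + 1 := ⟨k - 2, by omega⟩
    simp [hw, D, hq, List.replicate_succ, List.flatten_flatten, List.map_ofFn, Function.comp_def]
  refine card_ne_two_of_blocks ?_ ?_ (hwD ▸ hΓ)
  · simp only [D, List.mem_append, List.mem_replicate, List.mem_flatten, List.mem_ofFn]
    rintro b (⟨-, rfl⟩ | ⟨_, ⟨i, rfl⟩, hb⟩)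
    · exact Or.inl rfl
    · rcases List.mem_cons.mp hb with rfl | hb
      · exact Or.inr rfl
      · exact Or.inl (List.eq_of_mem_replicate hb)
  · simp only [D, List.mem_append, List.mem_flatten, List.mem_ofFn]
    exact Or.inr ⟨_, ⟨⟨0, hj⟩, rfl⟩, List.mem_cons_self⟩

theorem stmt_13 (k : ℕ) (hk : 2 ≤ k) (j : ℕ) (hj : 1 ≤ j)
    (p : ℕ → ℕ)
    (hp : ∀ i ≤ j, p i = k - 2 ∨ p i = k - 1)
    (hp0 : p 0 = k - 1) (hpj : p j = k - 1)
    (w : List Bool)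
    (hw : w = (List.replicate (p 0) [false, true]).flatten ++
      (List.ofFn (fun i : Fin j =>
        [false, true, true, false, false, true] ++
          (List.replicate (p (i + 1)) [false, true]).flatten)).flatten) :
    ∀ Γ : Finset ℕ, IsAttractor w Γ → Γ.card ≠ 2 :=
  stmt_13_general k hk j hj p hp0 w hw
end
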